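/- Let C be a small category, α a cardinal, and Set_α the full subcategory of Set on sets of cardinality < α. Define presheaves 𝒱_α(c) = Fun(C/c, Set_αᵒᵖ) and 𝒱̇_α(c) = Fun(C/c, Set∙,αᵒᵖ), with the forgetful map 𝒱̇_α → 𝒱_α. Then for every α-small morphism of presheaves f : Y ⟶ X there is a pullback square in presheaves on C with left map f, right map 𝒱̇_α → 𝒱_α, bottom map X → 𝒱_α sending x ∈ X(c) to the functor (g : d → c) ↦ f_d⁻¹{X(g)(x)}, and top map Y → 𝒱̇_α sending y ∈ Y(c) to the functor (g : d → c) ↦ (f_d⁻¹{X(g)(f_c(y))}, Y(g)(y)). -/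

import Mathlib

open CategoryTheory Opposite Limits

universe u

namespace HS

variable {C : Type u} [SmallCategory C]

/-- The full subcategory `Set_α` of `Set` on the `α`-small sets (cardinality `< α`). -/
def SmallSet (α : Cardinal.{u}) : Type (u + 1) :=
  ObjectProperty.FullSubcategory (fun S : Type u => Cardinal.mk S < α)

instance (α : Cardinal.{u}) : Category.{u} (SmallSet α) :=
  ObjectProperty.FullSubcategory.category _

/-- The category `Set∙,α` of `α`-small pointed sets. -/
def SmallPointed (α : Cardinal.{u}) : Type (u + 1) :=
  ObjectProperty.FullSubcategory (fun P : Pointed.{u} => Cardinal.mk P.X < α)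

instance (α : Cardinal.{u}) : Category.{u} (SmallPointed α) :=
  ObjectProperty.FullSubcategory.category _

/-- The forgetful functor `Set∙,α ⥤ Set_α`. -/
def smallForget (α : Cardinal.{u}) : SmallPointed α ⥤ SmallSet α where
  obj P := ⟨P.obj.X, P.property⟩
  map f := ObjectProperty.homMk (TypeCat.ofHom f.hom.toFun)

/-- The nerve presheaf `c ↦ Fun(C/c, A)` of a (possibly large) category `A`. -/
def nerveObj (C : Type u) [SmallCategory C] (A : Type (u + 1)) [Category.{u} A] :
    Cᵒᵖ ⥤ Type (u + 1) where
  obj c := Over c.unop ⥤ A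
  map h := TypeCat.ofHom fun P => Over.map h.unop ⋙ P
  map_id c := by
    ext P
    show Over.map (𝟙 c.unop) ⋙ P = P
    rw [Over.mapId_eq]
    rfl
  map_comp h k := by
    ext P
    show Over.map (k.unop ≫ h.unop) ⋙ P = _
    rw [Over.mapComp_eq]
    rfl

/-- The universe `𝒱_α` of `α`-small families: `𝒱_α(c) = Fun(C/c, Set_αᵒᵖ)`. -/
def V (C : Type u) [SmallCategory C] (α : Cardinal.{u}) : Cᵒᵖ ⥤ Type (u + 1) :=
  nerveObj C (SmallSet α)ᵒᵖ

/-- The pointed universe `𝒱̇_α`: `𝒱̇_α(c) = Fun(C/c, Set∙,αᵒᵖ)`. -/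
def Vdot (C : Type u) [SmallCategory C] (α : Cardinal.{u}) : Cᵒᵖ ⥤ Type (u + 1) :=
  nerveObj C (SmallPointed α)ᵒᵖ

/-- The forgetful map of presheaves `𝒱̇_α ⟶ 𝒱_α`, by postcomposition with the
(opposite of the) forgetful functor `Set∙,α ⥤ Set_α`. -/
def VdotToV (C : Type u) [SmallCategory C] (α : Cardinal.{u}) : Vdot C α ⟶ V C α where
  app c := TypeCat.ofHom fun P => P ⋙ (smallForget α).op

/-- A map of presheaves is `α`-small if all of its fibers have cardinality `< α`. -/
def AlphaSmall {Y X : Cᵒᵖ ⥤ Type u} (α : Cardinal.{u}) (f : Y ⟶ X) : Prop :=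
  ∀ (c : Cᵒᵖ) (x : X.obj c), Cardinal.mk {y : Y.obj c // f.app c y = x} < α

/-- The fiber of a map of presheaves `f : Y ⟶ X` over an element `x ∈ X(d)`. -/
def fib {Y X : Cᵒᵖ ⥤ Type u} (f : Y ⟶ X) {d : C} (x : X.obj (op d)) : Type u :=
  {y : Y.obj (op d) // f.app (op d) y = x}

lemma fib_map {Y X : Cᵒᵖ ⥤ Type u} (f : Y ⟶ X) {d d' : C} (m : d ⟶ d')
    {x : X.obj (op d')} (y : fib f x) : f.app (op d) (Y.map m.op y.1) = X.map m.op x := by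
  rw [FunctorToTypes.naturality, y.2]

variable {Y X : Cᵒᵖ ⥤ Type u} {α : Cardinal.{u}} (f : Y ⟶ X) (hf : AlphaSmall α f)

/-- The classifying functor `C/c ⥤ Set_αᵒᵖ` of an `α`-small map `f : Y ⟶ X` at an element
`x ∈ X(c)`, sending `(g : d ⟶ c)` to the fiber `f_d⁻¹{X(g)(x)}`. -/
def classifySmall {c : C} (x : X.obj (op c)) : Over c ⥤ (SmallSet α)ᵒᵖ where
  obj g := op ⟨fib f (X.map g.hom.op x), hf _ _⟩
  map {g g'} m :=
    Quiver.Hom.op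
      (show (⟨fib f (X.map g'.hom.op x), _⟩ : SmallSet α) ⟶ ⟨fib f (X.map g.hom.op x), _⟩ from
        ObjectProperty.homMk <| TypeCat.ofHom fun y => ⟨Y.map m.left.op y.1, by
          change f.app (op g.left) (Y.map m.left.op y.1) = X.map g.hom.op x
          rw [fib_map f m.left y, ← types_comp_apply (X.map g'.hom.op) (X.map m.left.op),
            ← X.map_comp, ← op_comp, Over.w m]⟩)
  map_id g := by
    apply Quiver.Hom.unop_inj
    apply ObjectProperty.hom_ext
    ext y
    apply Subtype.ext
    change Y.map (𝟙 g.left).op y.1 = y.1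
    rw [op_id, Y.map_id]
    rfl
  map_comp {g g' g''} m m' := by
    apply Quiver.Hom.unop_inj
    apply ObjectProperty.hom_ext
    ext y
    apply Subtype.ext
    change Y.map (m.left ≫ m'.left).op y.1 = Y.map m.left.op (Y.map m'.left.op y.1)
    rw [op_comp, Y.map_comp]
    rfl

/-- The pointed classifying functor `C/c ⥤ Set∙,αᵒᵖ` of an `α`-small map `f : Y ⟶ X` at an
element `y ∈ Y(c)`, sending `(g : d ⟶ c)` to `(f_d⁻¹{X(g)(f_c(y))}, Y(g)(y))`. -/
def classifyDotSmall {c : C} (y : Y.obj (op c)) : Over c ⥤ (SmallPointed α)ᵒᵖ where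
  obj g := op ⟨⟨fib f (X.map g.hom.op (f.app (op c) y)),
    ⟨Y.map g.hom.op y, by rw [FunctorToTypes.naturality]⟩⟩, hf _ _⟩
  map {g g'} m :=
    Quiver.Hom.op
      (show (⟨⟨fib f (X.map g'.hom.op (f.app (op c) y)), _⟩, _⟩ : SmallPointed α) ⟶
          ⟨⟨fib f (X.map g.hom.op (f.app (op c) y)), _⟩, _⟩ from
        ObjectProperty.homMk ⟨fun z => ⟨Y.map m.left.op z.1, by
            change f.app (op g.left) (Y.map m.left.op z.1) = X.map g.hom.op (f.app (op c) y)
            rw [fib_map f m.left z, ← types_comp_apply (X.map g'.hom.op) (X.map m.left.op),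
              ← X.map_comp, ← op_comp, Over.w m]⟩, by
          apply Subtype.ext
          change Y.map m.left.op (Y.map g'.hom.op y) = Y.map g.hom.op y
          rw [← types_comp_apply (Y.map g'.hom.op) (Y.map m.left.op), ← Y.map_comp,
            ← op_comp, Over.w m]⟩)
  map_id g := by
    apply Quiver.Hom.unop_inj
    apply ObjectProperty.hom_ext
    apply Pointed.Hom.ext
    funext z
    apply Subtype.ext
    change Y.map (𝟙 g.left).op z.1 = z.1
    rw [op_id, Y.map_id]
    rfl
  map_comp {g g' g''} m m' := by
    apply Quiver.Hom.unop_inj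
    apply ObjectProperty.hom_ext
    apply Pointed.Hom.ext
    funext z
    apply Subtype.ext
    change Y.map (m.left ≫ m'.left).op z.1 = Y.map m.left.op (Y.map m'.left.op z.1)
    rw [op_comp, Y.map_comp]
    rfl

/-! The classifying functors depend on a point only through the compatible family of its
restrictions along `C/c` (`fiberFunctor`, `pointedFiberFunctor`), so their naturality in `c` is a
congruence. In the objectwise square, a pointed lift `P` of `classifySmall f hf x` is determined
by its value at the terminal object `𝟙 c` of `C/c`, since every other point of `P` is the image
of that one; this value is a point `y` of the fibre over `x`, and `P = classifyDotSmall f hf y`. -/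

lemma map_left_map_hom_apply (F : Cᵒᵖ ⥤ Type*) {c : C} (x : F.obj (op c))
    {g g' : Over c} (m : g ⟶ g') : F.map m.left.op (F.map g'.hom.op x) = F.map g.hom.op x := by
  rw [← Functor.map_comp_apply, ← op_comp, Over.w m]

section FiberFunctor

variable {c : C} (ξ : ∀ g : Over c, X.obj (op g.left))
  (hξ : ∀ {g g' : Over c} (m : g ⟶ g'), X.map m.left.op (ξ g') = ξ g)

def fiberFunctor : Over c ⥤ (SmallSet α)ᵒᵖ where
  obj g := op ⟨fib f (ξ g), hf _ _⟩
  map {g g'} m := Quiver.Hom.op <| ObjectProperty.homMk <| TypeCat.ofHom fun z =>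
    ⟨Y.map m.left.op z.1, by rw [fib_map f m.left z, hξ m]⟩
  map_id g := by
    apply Quiver.Hom.unop_inj
    apply ObjectProperty.hom_ext
    ext z
    exact Subtype.ext (show Y.map (𝟙 g.left).op z.1 = z.1 from Y.map_id_apply _ _)
  map_comp m m' := by
    apply Quiver.Hom.unop_inj
    apply ObjectProperty.hom_ext
    ext z
    exact Subtype.ext
      (show Y.map (m'.left.op ≫ m.left.op) z.1 = Y.map m.left.op (Y.map m'.left.op z.1) from
        Y.map_comp_apply _ _ _)

lemma over_map_comp_fiberFunctor {c' : C} (k : c' ⟶ c) :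
    Over.map k ⋙ fiberFunctor f hf ξ hξ =
      fiberFunctor f hf (fun g => ξ ((Over.map k).obj g)) (fun m => hξ ((Over.map k).map m)) :=
  rfl

lemma classifySmall_eq_fiberFunctor (x : X.obj (op c)) :
    classifySmall f hf x =
      fiberFunctor f hf (fun g => X.map g.hom.op x) (map_left_map_hom_apply X x) :=
  rfl

lemma classifySmall_naturality {c' : C} (k : c' ⟶ c) (x : X.obj (op c)) :
    Over.map k ⋙ classifySmall f hf x = classifySmall f hf (X.map k.op x) := by
  rw [classifySmall_eq_fiberFunctor, classifySmall_eq_fiberFunctor, over_map_comp_fiberFunctor]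
  congr 1
  funext g
  exact X.map_comp_apply k.op g.hom.op x

variable (η : ∀ g : Over c, Y.obj (op g.left))
  (hη : ∀ {g g' : Over c} (m : g ⟶ g'), Y.map m.left.op (η g') = η g)
  (hηξ : ∀ g, f.app (op g.left) (η g) = ξ g)

def pointedFiberFunctor : Over c ⥤ (SmallPointed α)ᵒᵖ where
  obj g := op ⟨⟨fib f (ξ g), ⟨η g, hηξ g⟩⟩, hf _ _⟩
  map {g g'} m := Quiver.Hom.op <| ObjectProperty.homMk
    ⟨fun z => ⟨Y.map m.left.op z.1, by rw [fib_map f m.left z, hξ m]⟩, Subtype.ext (hη m)⟩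
  map_id g := by
    apply Quiver.Hom.unop_inj
    apply ObjectProperty.hom_ext
    ext z
    exact Subtype.ext (show Y.map (𝟙 g.left).op z.1 = z.1 from Y.map_id_apply _ _)
  map_comp m m' := by
    apply Quiver.Hom.unop_inj
    apply ObjectProperty.hom_ext
    ext z
    exact Subtype.ext
      (show Y.map (m'.left.op ≫ m.left.op) z.1 = Y.map m.left.op (Y.map m'.left.op z.1) from
        Y.map_comp_apply _ _ _)

lemma over_map_comp_pointedFiberFunctor {c' : C} (k : c' ⟶ c) :
    Over.map k ⋙ pointedFiberFunctor f hf ξ hξ η hη hηξ =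
      pointedFiberFunctor f hf (fun g => ξ ((Over.map k).obj g)) (fun m => hξ ((Over.map k).map m))
        (fun g => η ((Over.map k).obj g)) (fun m => hη ((Over.map k).map m))
        (fun g => hηξ ((Over.map k).obj g)) :=
  rfl

lemma classifyDotSmall_eq_pointedFiberFunctor (y : Y.obj (op c)) :
    classifyDotSmall f hf y =
      pointedFiberFunctor f hf (fun g => X.map g.hom.op (f.app (op c) y))
        (map_left_map_hom_apply X _) (fun g => Y.map g.hom.op y) (map_left_map_hom_apply Y y)
        (fun g => NatTrans.naturality_apply f g.hom.op y) :=
  rfl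

lemma classifyDotSmall_naturality {c' : C} (k : c' ⟶ c) (y : Y.obj (op c)) :
    Over.map k ⋙ classifyDotSmall f hf y = classifyDotSmall f hf (Y.map k.op y) := by
  rw [classifyDotSmall_eq_pointedFiberFunctor, classifyDotSmall_eq_pointedFiberFunctor,
    over_map_comp_pointedFiberFunctor]
  congr 1
  · funext g
    rw [NatTrans.naturality_apply f k.op y]
    exact X.map_comp_apply k.op g.hom.op _
  · funext g
    exact Y.map_comp_apply k.op g.hom.op y

end FiberFunctor

theorem _root_.CategoryTheory.Functor.ext_of_comp_faithful {J A B : Type*} [Category J]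
    [Category A] [Category B] {P P' : J ⥤ A} (F : A ⥤ B) [F.Faithful]
    (hobj : ∀ j, P.obj j = P'.obj j) (h : P ⋙ F = P' ⋙ F) : P = P' :=
  CategoryTheory.Functor.ext hobj fun _ _ m => F.map_injective <| by
    simpa [eqToHom_map] using Functor.congr_hom h m

instance : (smallForget α).Faithful where
  map_injective h := ObjectProperty.hom_ext _ <| Pointed.Hom.ext <|
    congrArg (fun u : (smallForget α).obj _ ⟶ (smallForget α).obj _ =>
      ⇑(ConcreteCategory.hom u.hom)) h

lemma SmallPointed.op_ext {A B : (SmallPointed α)ᵒᵖ} (hX : A.unop.obj.X = B.unop.obj.X)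
    (hpt : A.unop.obj.point ≍ B.unop.obj.point) : A = B := by
  obtain ⟨⟨⟨_, _⟩, _⟩⟩ := A
  obtain ⟨⟨⟨_, _⟩, _⟩⟩ := B
  cases hX
  cases hpt
  rfl

lemma SmallPointed.op_eq_of_heq_map {A A' B B' : (SmallPointed α)ᵒᵖ} (φ : B ⟶ A) (φ' : B' ⟶ A')
    (hA : A = A') (hB : (smallForget α).op.obj B = (smallForget α).op.obj B')
    (hφ : (smallForget α).op.map φ ≍ (smallForget α).op.map φ') : B = B' := by
  subst hA
  obtain ⟨⟨⟨X, p⟩, hX⟩⟩ := B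
  obtain ⟨⟨⟨X', p'⟩, hX'⟩⟩ := B'
  cases hB
  have hfun : φ.unop.hom.toFun = φ'.unop.hom.toFun :=
    congrArg (fun u : (smallForget α).op.obj _ ⟶ (smallForget α).op.obj _ =>
      ⇑(ConcreteCategory.hom u.unop.hom)) (eq_of_heq hφ)
  obtain rfl : p = p' :=
    φ.unop.hom.map_point.symm.trans ((congrFun hfun _).trans φ'.unop.hom.map_point)
  rfl

lemma ext_of_comp_smallForget {J : Type*} [Category J] {t : J} (ht : IsTerminal t)
    {P P' : J ⥤ (SmallPointed α)ᵒᵖ} (h : P ⋙ (smallForget α).op = P' ⋙ (smallForget α).op)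
    (ht' : P.obj t = P'.obj t) : P = P' :=
  Functor.ext_of_comp_faithful _ (fun j => SmallPointed.op_eq_of_heq_map (P.map (ht.from j))
    (P'.map (ht.from j)) ht' (Functor.congr_obj h j) (Functor.hcongr_hom h (ht.from j))) h

lemma eq_of_classifyDotSmall_eq {c : C} {a b : Y.obj (op c)}
    (h : classifyDotSmall f hf a = classifyDotSmall f hf b)
    (hab : f.app (op c) a = f.app (op c) b) : a = b := by
  have hpt := congr_arg_heq (fun P : (SmallPointed α)ᵒᵖ => P.unop.obj.point)
    (Functor.congr_obj h (Over.mk (𝟙 c)))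
  have hval : Y.map (𝟙 c).op a = Y.map (𝟙 c).op b :=
    (Subtype.heq_iff_coe_eq (by simp [hab])).1 hpt
  simpa using hval

lemma exists_classifyDotSmall_eq {c : C} {x : X.obj (op c)} {P : Over c ⥤ (SmallPointed α)ᵒᵖ}
    (hP : P ⋙ (smallForget α).op = classifySmall f hf x) :
    ∃ y, f.app (op c) y = x ∧ classifyDotSmall f hf y = P := by
  let t := Over.mk (𝟙 c)
  have e : (P.obj t).unop.obj.X = fib f (X.map (𝟙 c).op x) :=
    congrArg (fun S : (SmallSet α)ᵒᵖ => S.unop.obj) (Functor.congr_obj hP t)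
  obtain ⟨⟨y, hy⟩, hpt⟩ : ∃ z : fib f (X.map (𝟙 c).op x), (P.obj t).unop.obj.point ≍ z :=
    ⟨cast e _, (cast_heq e _).symm⟩
  obtain rfl : f.app (op c) y = x := hy.trans (X.map_id_apply _ x)
  refine ⟨y, rfl, ext_of_comp_smallForget Over.mkIdTerminal hP.symm ?_⟩
  refine SmallPointed.op_ext e.symm (hpt.trans (heq_of_eq (Subtype.ext ?_))).symm
  exact (Y.map_id_apply _ y).symm

def classifySmallHom : X ⋙ uliftFunctor.{u + 1} ⟶ V C α where
  app c := TypeCat.ofHom fun x => classifySmall f hf x.down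
  naturality _ _ k := by
    ext x
    exact (classifySmall_naturality f hf k.unop x.down).symm

def classifyDotSmallHom : Y ⋙ uliftFunctor.{u + 1} ⟶ Vdot C α where
  app c := TypeCat.ofHom fun y => classifyDotSmall f hf y.down
  naturality _ _ k := by
    ext y
    exact (classifyDotSmall_naturality f hf k.unop y.down).symm

/-- For every `α`-small morphism of presheaves `f : Y ⟶ X` on a small
category `C` there is a pullback square in presheaves (valued one universe higher) with
left map `f`, right map the forgetful map `𝒱̇_α ⟶ 𝒱_α`, bottom map sending `x ∈ X(c)` to
the functor `(g : d ⟶ c) ↦ f_d⁻¹{X(g)(x)}`, and top map sending `y ∈ Y(c)` to the functor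
`(g : d ⟶ c) ↦ (f_d⁻¹{X(g)(f_c(y))}, Y(g)(y))`. -/
theorem alphaSmall_isPullback (C : Type u) [SmallCategory C] (α : Cardinal.{u})
    {Y X : Cᵒᵖ ⥤ Type u} (f : Y ⟶ X) (hf : AlphaSmall α f) :
    ∃ (top : Y ⋙ uliftFunctor.{u + 1} ⟶ Vdot C α) (bot : X ⋙ uliftFunctor.{u + 1} ⟶ V C α),
      (∀ (c : C) (y : Y.obj (op c)), top.app (op c) ⟨y⟩ = classifyDotSmall f hf y) ∧
      (∀ (c : C) (x : X.obj (op c)), bot.app (op c) ⟨x⟩ = classifySmall f hf x) ∧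
      IsPullback top (Functor.whiskerRight f uliftFunctor.{u + 1}) (VdotToV C α) bot := by
  refine ⟨classifyDotSmallHom f hf, classifySmallHom f hf, fun _ _ => rfl, fun _ _ => rfl,
    IsPullback.of_forall_isPullback_app fun c => (Types.isPullback_iff _ _ _ _).2 ⟨rfl, ?_, ?_⟩⟩
  · rintro ⟨a⟩ ⟨b⟩ ⟨hab, hfab⟩
    exact congrArg ULift.up (eq_of_classifyDotSmall_eq f hf hab (congrArg ULift.down hfab))
  · rintro P ⟨x⟩ hP
    obtain ⟨y, rfl, rfl⟩ := exists_classifyDotSmall_eq f hf hP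
    exact ⟨⟨y⟩, rfl, rfl⟩

end HS
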